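/- The optimal value function u satisfies u(t) ~ √(2t) as t → ∞, i.e. lim_{t→∞} u(t)/√(2t) = 1. -/

import Mathlib

/-- The operator `J` from the paper: `(Jf)(t) = ∫₀¹ (f(t(1−x)) + 1 − f(t))⁺ dx`. -/
noncomputable def Jop (f : ℝ → ℝ) (t : ℝ) : ℝ :=
  ∫ x in (0 : ℝ)..1, max (f (t * (1 - x)) + 1 - f t) 0

/-!
Comparison with square-root barriers `g(s) = a √(2s) + c`. For them `J g (t)` depends only on
`ρ = a √(2t)`, namely `J g (t) = ∫₀¹ (ρ √(1-x) + 1 - ρ)⁺ dx`, which lies between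
`1/ρ - 4/(3ρ²)` and `1/ρ`, while `g'(t) = a²/ρ`. If `u` touches `g` from below for the first
time at `t₀`, then `u'(t₀) ≥ g'(t₀)`, and `J u (t₀) ≤ J g (t₀)` because `J f (t)` only compares
`f` on `[0, t]` with `f(t)`. For `a = β > 1` this gives `β²/ρ ≤ u'(t₀) = J u (t₀) ≤ 1/ρ`, which
is absurd, so `u ≤ β √(2t) + 1`. Symmetrically `u ≥ α √(2t) - 2/(1-α²)` for `0 < α < 1`, and
letting `α, β → 1` gives the limit.
-/

open Set Filter Real Topology intervalIntegral

theorem exists_first_zero {f : ℝ → ℝ} {t : ℝ} (hf : ContinuousOn f (Ici 0)) (hf0 : f 0 < 0)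
    (ht : 0 ≤ t) (hft : 0 ≤ f t) : ∃ t₀ > 0, f t₀ = 0 ∧ ∀ s ∈ Icc 0 t₀, f s ≤ 0 := by
  set Z := Icc 0 t ∩ f ⁻¹' Ici 0
  have hZ : IsClosed Z :=
    (hf.mono Icc_subset_Ici_self).preimage_isClosed_of_isClosed isClosed_Icc isClosed_Ici
  have hZbdd : BddBelow Z := ⟨0, fun s hs => hs.1.1⟩
  obtain ⟨⟨ht₀0, ht₀t⟩, hft₀⟩ := hZ.csInf_mem ⟨t, ⟨ht, le_rfl⟩, hft⟩ hZbdd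
  set t₀ := sInf Z
  have hbelow : ∀ s ∈ Ico 0 t₀, f s < 0 := fun s hs =>
    not_le.1 fun hfs => (csInf_le hZbdd ⟨⟨hs.1, hs.2.le.trans ht₀t⟩, hfs⟩).not_gt hs.2
  have hpos : 0 < t₀ := ht₀0.lt_of_ne fun h => by rw [← h] at hft₀; exact hft₀.not_gt hf0
  have hzero : f t₀ = 0 := by
    obtain ⟨c, hc, hfc⟩ := intermediate_value_Icc ht₀0 (hf.mono Icc_subset_Ici_self)
      ⟨hf0.le, hft₀⟩
    rcases hc.2.lt_or_eq with hlt | rfl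
    · exact absurd hfc (hbelow c ⟨hc.1, hlt⟩).ne
    · exact hfc
  refine ⟨t₀, hpos, hzero, fun s hs => ?_⟩
  rcases hs.2.lt_or_eq with hlt | rfl
  · exact (hbelow s ⟨hs.1, hlt⟩).le
  · exact hzero.le

theorem HasDerivWithinAt.nonneg_of_isMaxOn_Icc {f : ℝ → ℝ} {a b d : ℝ} (hab : a < b)
    (hd : HasDerivWithinAt f d (Icc a b) b) (hmax : IsMaxOn f (Icc a b) b) : 0 ≤ d := by
  have hcone : a - b ∈ posTangentConeAt (Icc a b) b :=
    sub_mem_posTangentConeAt_of_segment_subset (by rw [segment_symm, segment_eq_Icc hab.le])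
  have h := hmax.localize.hasFDerivWithinAt_nonpos hd.hasFDerivWithinAt hcone
  simp only [ContinuousLinearMap.toSpanSingleton_apply, smul_eq_mul] at h
  nlinarith

theorem hasDerivAt_mul_sqrt_two_mul_add (a c : ℝ) {t : ℝ} (ht : 0 < t) :
    HasDerivAt (fun s => a * √(2 * s) + c) (a / √(2 * t)) t := by
  have h := (((hasDerivAt_id' t).const_mul 2).sqrt (by positivity)).const_mul a |>.add_const c
  refine h.congr_deriv ?_
  field_simp

theorem mul_one_sub_mem_Icc {t x : ℝ} (ht : 0 ≤ t) (hx : x ∈ Icc (0 : ℝ) 1) :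
    t * (1 - x) ∈ Icc 0 t :=
  ⟨mul_nonneg ht (by linarith [hx.2]), mul_le_of_le_one_right ht (by linarith [hx.1])⟩

theorem Jop_nonneg (f : ℝ → ℝ) (t : ℝ) : 0 ≤ Jop f t :=
  integral_nonneg zero_le_one fun _ _ => le_max_right _ _

theorem intervalIntegrable_Jop_integrand {f : ℝ → ℝ} {t : ℝ} (ht : 0 ≤ t)
    (hf : ContinuousOn f (Icc 0 t)) :
    IntervalIntegrable (fun x => max (f (t * (1 - x)) + 1 - f t) 0) MeasureTheory.volume 0 1 := by
  refine ContinuousOn.intervalIntegrable_of_Icc zero_le_one ?_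
  exact (((hf.comp (by fun_prop) fun x hx => mul_one_sub_mem_Icc ht hx).add
    continuousOn_const).sub continuousOn_const).sup continuousOn_const

theorem Jop_le_Jop {f g : ℝ → ℝ} {t : ℝ} (ht : 0 ≤ t) (hf : ContinuousOn f (Icc 0 t))
    (hg : ContinuousOn g (Icc 0 t)) (hle : ∀ s ∈ Icc 0 t, f s ≤ g s) (heq : f t = g t) :
    Jop f t ≤ Jop g t := by
  refine integral_mono_on zero_le_one (intervalIntegrable_Jop_integrand ht hf)
    (intervalIntegrable_Jop_integrand ht hg) fun x hx => max_le_max ?_ le_rfl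
  linarith [hle _ (mul_one_sub_mem_Icc ht hx)]

noncomputable def Jsqrt (ρ : ℝ) : ℝ := ∫ x in (0 : ℝ)..1, max (ρ * √(1 - x) + 1 - ρ) 0

theorem Jop_mul_sqrt_add (a c : ℝ) {t : ℝ} (ht : 0 ≤ t) :
    Jop (fun s => a * √(2 * s) + c) t = Jsqrt (a * √(2 * t)) := by
  refine integral_congr fun x _ => ?_
  simp only
  rw [show 2 * (t * (1 - x)) = 2 * t * (1 - x) by ring, sqrt_mul (by positivity)]
  ring_nf

theorem continuous_Jsqrt_integrand (ρ : ℝ) :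
    Continuous fun x => max (ρ * √(1 - x) + 1 - ρ) 0 := by
  fun_prop

theorem Jsqrt_le {ρ : ℝ} (hρ : 0 < ρ) : Jsqrt ρ ≤ 1 / ρ := by
  set φ : ℝ → ℝ := fun x => max (1 - ρ / 2 * x) 0
  have hφ : Continuous φ := by fun_prop
  have h2ρ : 0 ≤ 2 / ρ := by positivity
  have hcut : 2 / ρ ≤ 2 / ρ + 1 := by linarith
  calc Jsqrt ρ ≤ ∫ x in (0 : ℝ)..1, φ x := by
        refine integral_mono_on zero_le_one ((continuous_Jsqrt_integrand ρ).intervalIntegrable _ _)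
          (hφ.intervalIntegrable _ _) fun x hx => max_le_max ?_ le_rfl
        have : √(1 - x) ≤ 1 - x / 2 :=
          sqrt_le_iff.2 ⟨by linarith [hx.2], by nlinarith [sq_nonneg x]⟩
        nlinarith
    _ ≤ ∫ x in (0 : ℝ)..(2 / ρ + 1), φ x :=
        integral_mono_interval le_rfl zero_le_one (by linarith)
          (Eventually.of_forall fun _ => le_max_right _ _) (hφ.intervalIntegrable _ _)
    _ = (∫ x in (0 : ℝ)..(2 / ρ), φ x) + ∫ x in (2 / ρ)..(2 / ρ + 1), φ x :=
        (integral_add_adjacent_intervals (hφ.intervalIntegrable _ _)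
          (hφ.intervalIntegrable _ _)).symm
    _ = (∫ x in (0 : ℝ)..(2 / ρ), (1 - ρ / 2 * x)) + ∫ x in (2 / ρ)..(2 / ρ + 1), (0 : ℝ) := by
        congr 1 <;> refine integral_congr fun x hx => ?_
        · rw [uIcc_of_le h2ρ] at hx
          have := (le_div_iff₀ hρ).1 hx.2
          exact max_eq_left (by linarith)
        · rw [uIcc_of_le hcut] at hx
          have := (div_le_iff₀ hρ).1 hx.1
          exact max_eq_right (by linarith)
    _ = 1 / ρ := by
        rw [integral_zero, add_zero, integral_sub intervalIntegrable_const
          (intervalIntegrable_id.const_mul _), intervalIntegral.integral_const_mul, integral_id,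
          integral_const, smul_eq_mul]
        field_simp
        ring

theorem le_Jsqrt {ρ : ℝ} (hρ : 2 ≤ ρ) : 1 / ρ - 4 / (3 * ρ ^ 2) ≤ Jsqrt ρ := by
  have hρ0 : 0 < ρ := by linarith
  have h2ρ : 2 / ρ ≤ 1 := (div_le_one hρ0).2 hρ
  calc 1 / ρ - 4 / (3 * ρ ^ 2) = ∫ x in (0 : ℝ)..(2 / ρ), (1 - ρ / 2 * x - ρ / 2 * x ^ 2) := by
        rw [integral_sub (Continuous.intervalIntegrable (by fun_prop) _ _)
            (Continuous.intervalIntegrable (by fun_prop) _ _),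
          integral_sub intervalIntegrable_const (intervalIntegrable_id.const_mul _),
          intervalIntegral.integral_const_mul, intervalIntegral.integral_const_mul, integral_id,
          integral_pow, integral_const, smul_eq_mul]
        norm_num
        field_simp
        ring
    _ ≤ ∫ x in (0 : ℝ)..(2 / ρ), max (ρ * √(1 - x) + 1 - ρ) 0 := by
        refine integral_mono_on (by positivity) (Continuous.intervalIntegrable (by fun_prop) _ _)
          ((continuous_Jsqrt_integrand ρ).intervalIntegrable _ _)
          fun x hx => le_max_of_le_left ?_
        have hx1 : x ≤ 1 := hx.2.trans h2ρ
        have : 1 - x / 2 - x ^ 2 / 2 ≤ √(1 - x) := by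
          rcases le_or_gt (1 - x / 2 - x ^ 2 / 2) 0 with h | h
          · exact h.trans (sqrt_nonneg _)
          · exact (le_sqrt h.le (by linarith)).2 (by nlinarith [hx.1])
        nlinarith
    _ ≤ Jsqrt ρ :=
        integral_mono_interval le_rfl (by positivity) h2ρ
          (Eventually.of_forall fun _ => le_max_right _ _)
          ((continuous_Jsqrt_integrand ρ).intervalIntegrable _ _)

theorem monotoneOn_of_hasDerivWithinAt_Jop {u : ℝ → ℝ}
    (hu : ∀ t ∈ Ici (0 : ℝ), HasDerivWithinAt u (Jop u t) (Ici 0) t) : MonotoneOn u (Ici 0) :=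
  monotoneOn_of_hasDerivWithinAt_nonneg (convex_Ici 0) (fun t ht => (hu t ht).continuousWithinAt)
    (fun t ht => (hu t (interior_subset ht)).mono interior_subset) fun t _ => Jop_nonneg u t

theorem lt_mul_sqrt_add_one {u : ℝ → ℝ}
    (hu : ∀ t ∈ Ici (0 : ℝ), HasDerivWithinAt u (Jop u t) (Ici 0) t) (hu0 : u 0 = 0)
    {β t : ℝ} (hβ : 1 < β) (ht : 0 ≤ t) :
    u t < β * √(2 * t) + 1 := by
  have hucont : ContinuousOn u (Ici 0) := fun t ht => (hu t ht).continuousWithinAt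
  by_contra! h
  obtain ⟨t₀, ht₀, hzero, hle⟩ := exists_first_zero (f := fun s => u s - (β * √(2 * s) + 1))
    (hucont.sub (by fun_prop)) (by simp [hu0]) ht (by linarith)
  set r := √(2 * t₀)
  have hr : 0 < r := by positivity
  have hJ : Jop u t₀ ≤ 1 / (β * r) :=
    calc Jop u t₀ ≤ Jop (fun s => β * √(2 * s) + 1) t₀ :=
          Jop_le_Jop ht₀.le (hucont.mono Icc_subset_Ici_self) (by fun_prop)
            (fun s hs => by linarith [hle s hs]) (by linarith)
      _ = Jsqrt (β * r) := Jop_mul_sqrt_add β 1 ht₀.le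
      _ ≤ 1 / (β * r) := Jsqrt_le (by positivity)
  have hderiv : 0 ≤ Jop u t₀ - β / r :=
    (((hu t₀ ht₀.le).mono Icc_subset_Ici_self).sub
      (hasDerivAt_mul_sqrt_two_mul_add β 1 ht₀).hasDerivWithinAt).nonneg_of_isMaxOn_Icc ht₀
      fun s hs => (hle s hs).trans hzero.ge
  have : β / r ≤ 1 / (β * r) := by linarith
  rw [div_le_div_iff₀ hr (by positivity)] at this
  nlinarith [mul_pos (mul_pos (sub_pos.2 hβ) (by linarith : (0 : ℝ) < β + 1)) hr]

theorem mul_sqrt_sub_lt {u : ℝ → ℝ}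
    (hu : ∀ t ∈ Ici (0 : ℝ), HasDerivWithinAt u (Jop u t) (Ici 0) t) (hu0 : u 0 = 0)
    {α t : ℝ} (hα₀ : 0 < α) (hα₁ : α < 1) (ht : 0 ≤ t) :
    α * √(2 * t) - 2 / (1 - α ^ 2) < u t := by
  have hucont : ContinuousOn u (Ici 0) := fun t ht => (hu t ht).continuousWithinAt
  -- With this `M`, a touching point has `(1 - α²) ρ ≥ 2 > 4/3`, hence `J g > g'` there.
  set M := 2 / (1 - α ^ 2)
  have hα2 : 0 < 1 - α ^ 2 := by nlinarith
  have hM : 2 ≤ M := (le_div_iff₀ hα2).2 (by nlinarith)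
  by_contra! h
  obtain ⟨t₀, ht₀, hzero, hle⟩ := exists_first_zero (f := fun s => α * √(2 * s) + -M - u s)
    ((by fun_prop : Continuous fun s => α * √(2 * s) + -M).continuousOn.sub hucont)
    (by simp [hu0]; positivity) ht (by linarith)
  set r := √(2 * t₀)
  have hr : 0 < r := by positivity
  have hρ : M ≤ α * r := by
    have := monotoneOn_of_hasDerivWithinAt_Jop hu self_mem_Ici ht₀.le ht₀.le
    linarith
  have hJ : 1 / (α * r) - 4 / (3 * (α * r) ^ 2) ≤ Jop u t₀ :=
    calc 1 / (α * r) - 4 / (3 * (α * r) ^ 2) ≤ Jsqrt (α * r) := le_Jsqrt (hM.trans hρ)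
      _ = Jop (fun s => α * √(2 * s) + -M) t₀ := (Jop_mul_sqrt_add α (-M) ht₀.le).symm
      _ ≤ Jop u t₀ :=
          Jop_le_Jop ht₀.le (by fun_prop) (hucont.mono Icc_subset_Ici_self)
            (fun s hs => by linarith [hle s hs]) (by linarith)
  have hderiv : 0 ≤ α / r - Jop u t₀ :=
    ((hasDerivAt_mul_sqrt_two_mul_add α (-M) ht₀).hasDerivWithinAt.sub
      ((hu t₀ ht₀.le).mono Icc_subset_Ici_self)).nonneg_of_isMaxOn_Icc ht₀
      fun s hs => (hle s hs).trans hzero.ge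
  have : 1 / (α * r) - 4 / (3 * (α * r) ^ 2) ≤ α / r := by linarith
  field_simp at this
  have hkey : (1 - α ^ 2) * M ≤ (1 - α ^ 2) * (α * r) := mul_le_mul_of_nonneg_left hρ hα2.le
  rw [mul_div_cancel₀ _ hα2.ne'] at hkey
  nlinarith

theorem tendsto_div_of_linear_bounds {ι : Type*} {l : Filter ι} {u g : ι → ℝ}
    (hg : Tendsto g l atTop)
    (hlow : ∀ α ∈ Ioo (0 : ℝ) 1, ∃ C, ∀ᶠ i in l, α * g i - C ≤ u i)
    (hup : ∀ β > (1 : ℝ), ∃ C, ∀ᶠ i in l, u i ≤ β * g i + C) :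
    Tendsto (fun i => u i / g i) l (𝓝 1) := by
  refine tendsto_order.2 ⟨fun a ha => ?_, fun b hb => ?_⟩
  · obtain ⟨α, hα, hα1⟩ := exists_between (max_lt ha one_pos)
    obtain ⟨haα, hα0⟩ := max_lt_iff.1 hα
    obtain ⟨C, hC⟩ := hlow α ⟨hα0, hα1⟩
    have hlim : Tendsto (fun i => α - C / g i) l (𝓝 α) := by
      simpa using tendsto_const_nhds.sub (tendsto_const_nhds.div_atTop hg)
    filter_upwards [hC, hg.eventually_gt_atTop 0,
      hlim.eventually (lt_mem_nhds haα)] with i hi hgi hai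
    calc a < α - C / g i := hai
      _ = (α * g i - C) / g i := by field_simp
      _ ≤ u i / g i := div_le_div_of_nonneg_right hi hgi.le
  · obtain ⟨β, hβ1, hβb⟩ := exists_between hb
    obtain ⟨C, hC⟩ := hup β hβ1
    have hlim : Tendsto (fun i => β + C / g i) l (𝓝 β) := by
      simpa using tendsto_const_nhds.add (tendsto_const_nhds.div_atTop hg)
    filter_upwards [hC, hg.eventually_gt_atTop 0,
      hlim.eventually (gt_mem_nhds hβb)] with i hi hgi hbi
    calc u i / g i ≤ (β * g i + C) / g i := div_le_div_of_nonneg_right hi hgi.le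
      _ = β + C / g i := by field_simp
      _ < b := hbi

theorem statement4_general (u u' : ℝ → ℝ)
    (hderiv : ∀ t ∈ Set.Ici (0 : ℝ), HasDerivWithinAt u (u' t) (Set.Ici (0 : ℝ)) t)
    (hu0 : u 0 = 0)
    (heq : ∀ t ∈ Set.Ici (0 : ℝ), u' t = Jop u t) :
    Filter.Tendsto (fun t => u t / Real.sqrt (2 * t)) Filter.atTop (nhds 1) := by
  have hu : ∀ t ∈ Ici (0 : ℝ), HasDerivWithinAt u (Jop u t) (Ici 0) t :=
    fun t ht => heq t ht ▸ hderiv t ht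
  refine tendsto_div_of_linear_bounds
    (tendsto_sqrt_atTop.comp (tendsto_id.const_mul_atTop two_pos))
    (fun α hα => ⟨2 / (1 - α ^ 2), ?_⟩) (fun β hβ => ⟨1, ?_⟩)
  · filter_upwards [eventually_ge_atTop 0] with t ht
    exact (mul_sqrt_sub_lt hu hu0 hα.1 hα.2 ht).le
  · filter_upwards [eventually_ge_atTop 0] with t ht
    exact (lt_mul_sqrt_add_one hu hu0 hβ ht).le

/-- The optimal value function `u` (the C¹ solution of `u′ = Ju`, `u(0) = 0`)
satisfies `u(t) ~ √(2t)` as `t → ∞`, i.e. `lim_{t→∞} u(t)/√(2t) = 1`. -/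
theorem statement4 (u u' : ℝ → ℝ)
    (hderiv : ∀ t ∈ Set.Ici (0 : ℝ), HasDerivWithinAt u (u' t) (Set.Ici (0 : ℝ)) t)
    (hcont : ContinuousOn u' (Set.Ici (0 : ℝ)))
    (hu0 : u 0 = 0)
    (heq : ∀ t ∈ Set.Ici (0 : ℝ), u' t = Jop u t) :
    Filter.Tendsto (fun t => u t / Real.sqrt (2 * t)) Filter.atTop (nhds 1) :=
  statement4_general u u' hderiv hu0 heq
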